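/- The function K(·, p) is strictly increasing in n for each fixed p ≥ 3: for all n ≥ 2, K(n, p) > K(n-1, p). -/

import Mathlib

/-!
On the level `r`, i.e. for `C(p+r-3, p-2) ≤ n < C(p+r-2, p-2)`, the formula is affine in `n` with
slope `2^r`. At a level boundary `n = C(p+r-2, p-2)` the formulas for levels `r` and `r + 1` agree,
because by Pascal's rule `C(p+r-2, p-2) - C(p+r-3, p-2) = C(p+r-3, p-3)` is exactly the new summand.
Hence `K(n, p) = K(n-1, p) + 2^r'`, where `r'` is the level of `n - 1`.
-/

open Finset in
/-- The Frame-Stewart quantity with explicit level r: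
K(n,p) = sum_{t=0}^{r-1} 2^t * C(p+t-3,p-3) + 2^r * (n - C(p+r-3,p-2)). -/
def FSK (n p r : ℕ) : ℕ :=
  (∑ t ∈ Finset.range r, 2 ^ t * Nat.choose (p + t - 3) (p - 3)) +
    2 ^ r * (n - Nat.choose (p + r - 3) (p - 2))

theorem StrictMono.le_of_le_of_lt_succ {α : Type*} [Preorder α] {f : ℕ → α} (hf : StrictMono f)
    {a b : ℕ} {x : α} (ha : f a ≤ x) (hb : x < f (b + 1)) : a ≤ b :=
  Nat.lt_succ_iff.1 (hf.lt_iff_lt.1 (ha.trans_lt hb))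

theorem strictMono_choose_add (q : ℕ) : StrictMono fun r => (q + r).choose (q + 1) := by
  refine strictMono_nat_of_lt_succ fun r => ?_
  rw [← add_assoc, Nat.choose_succ_succ']
  exact Nat.lt_add_of_pos_left (Nat.choose_pos (by omega))

theorem FSK_succ_left {n p r : ℕ} (h : (p + r - 3).choose (p - 2) ≤ n) :
    FSK (n + 1) p r = FSK n p r + 2 ^ r := by
  rw [FSK, FSK, Nat.sub_add_comm h, mul_add_one, add_assoc]

theorem FSK_add_three (n q r : ℕ) :
    FSK n (q + 3) r =
      ∑ t ∈ Finset.range r, 2 ^ t * (q + t).choose q +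
        2 ^ r * (n - (q + r).choose (q + 1)) := by
  simp only [FSK, Nat.reduceSubDiff, Nat.add_sub_cancel, Nat.add_right_comm _ 3]

theorem FSK_choose_succ_level (q r : ℕ) :
    FSK ((q + (r + 1)).choose (q + 1)) (q + 3) (r + 1) =
      FSK ((q + (r + 1)).choose (q + 1)) (q + 3) r := by
  rw [FSK_add_three, FSK_add_three, Nat.sub_self, mul_zero, add_zero, Finset.sum_range_succ,
    ← add_assoc, Nat.choose_succ_succ', Nat.add_sub_cancel]

theorem FSK_succ_of_level {m q r r' : ℕ}
    (h1 : (q + r).choose (q + 1) ≤ m + 1) (h2 : m + 1 < (q + (r + 1)).choose (q + 1))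
    (h1' : (q + r').choose (q + 1) ≤ m) (h2' : m < (q + (r' + 1)).choose (q + 1)) :
    FSK (m + 1) (q + 3) r = FSK m (q + 3) r' + 2 ^ r' := by
  have hc := strictMono_choose_add q
  have hstep : FSK (m + 1) (q + 3) r' = FSK m (q + 3) r' + 2 ^ r' :=
    FSK_succ_left (by simpa only [Nat.reduceSubDiff, Nat.add_sub_cancel, Nat.add_right_comm _ 3])
  by_cases hr : (q + r).choose (q + 1) ≤ m
  · obtain rfl : r = r' :=
      le_antisymm (hc.le_of_le_of_lt_succ hr h2') (hc.le_of_le_of_lt_succ h1' (by omega))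
    exact hstep
  · have hlt : r' + 1 ≤ r :=
      hc.lt_iff_lt.1 (show (q + r').choose (q + 1) < (q + r).choose (q + 1) by omega)
    have hboundary : m + 1 = (q + (r' + 1)).choose (q + 1) := by
      have := hc.monotone hlt
      omega
    obtain rfl : r = r' + 1 :=
      hc.injective (show (q + r).choose (q + 1) = (q + (r' + 1)).choose (q + 1) by omega)
    rw [hboundary, FSK_choose_succ_level, ← hboundary, hstep]

/-- K(.,p) is strictly increasing: K(n,p) > K(n-1,p) for n >= 2, with r, r' the levels of n and n-1. -/
theorem FSK_strictMono (n p r r' : ℕ) (hn : 2 ≤ n) (hp : 3 ≤ p)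
    (h1 : Nat.choose (p + r - 3) (p - 2) ≤ n)
    (h2 : n < Nat.choose (p + r - 2) (p - 2))
    (h1' : Nat.choose (p + r' - 3) (p - 2) ≤ n - 1)
    (h2' : n - 1 < Nat.choose (p + r' - 2) (p - 2)) :
    FSK n p r > FSK (n - 1) p r' := by
  obtain ⟨q, rfl⟩ : ∃ q, p = q + 3 := ⟨p - 3, by omega⟩
  obtain ⟨m, rfl⟩ : ∃ m, n = m + 1 := ⟨n - 1, by omega⟩
  simp only [Nat.reduceSubDiff, Nat.add_sub_cancel, Nat.add_right_comm _ 3] at h1 h2 h1' h2' ⊢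
  rw [FSK_succ_of_level h1 h2 h1' h2']
  exact Nat.lt_add_of_pos_right (Nat.two_pow_pos r')
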